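/- arXiv:1801.09366 — 5 statements merged into one kernel-verified Lean document; each statement's English description precedes it below -/
import Mathlib

section
/- If B ∈ ℝ^{s×n} has rank s and the quadratic form x ↦ xᵀ(AᵀΣ_{pq}A)x is positive for all nonzero x in the null space of B, then the (s+m+n)×(s+m+n) block matrix 𝒜 = [[0,0,B],[0,Σ_{pq},A],[Bᵀ,Aᵀ,0]] is invertible. -/
/-!
A kernel vector `(l, z, x)` of the block matrix satisfies `B x = 0`, `Σ z + A x = 0` and
`Bᵀ l + Aᵀ z = 0`. Since `Σ² = 1`, the second equation gives `Σ A x = -z`, so pairing the third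
with `x` yields `xᵀ Aᵀ Σ A x = (B x)ᵀ l = 0`; definiteness on `ker B` forces `x = 0`, then
`z = Σ (Σ z) = 0`, and `l = 0` because `B` has independent rows.
-/

open Matrix

namespace Matrix

variable {R : Type*} {k m n : Type*} [Fintype k] [Fintype m] [Fintype n]

theorem linearIndependent_row_of_rank_eq_card [Field R] {M : Matrix m n R}
    (h : M.rank = Fintype.card m) : LinearIndependent R M.row := by
  rw [linearIndependent_iff_card_eq_finrank_span, ← h, rank_eq_finrank_span_row, Set.finrank]

theorem fromBlocks_one_zero_zero_neg_one_mul_self [Ring R] [DecidableEq m] [DecidableEq n] :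
    fromBlocks (1 : Matrix m m R) 0 0 (-1 : Matrix n n R) * fromBlocks 1 0 0 (-1) = 1 := by
  simp [fromBlocks_multiply, fromBlocks_one]

variable [CommRing R] [DecidableEq m] {A : Matrix m n R} {B : Matrix k n R} {S : Matrix m m R}

theorem dotProduct_mulVec_eq_zero_of_saddlePoint (hS : S * S = 1) {l : k → R} {z : m → R}
    {x : n → R} (hx : B *ᵥ x = 0) (hz : S *ᵥ z + A *ᵥ x = 0) (hl : Bᵀ *ᵥ l + Aᵀ *ᵥ z = 0) :
    x ⬝ᵥ (Aᵀ * S * A) *ᵥ x = 0 := by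
  have hAx : A *ᵥ x = -(S *ᵥ z) := eq_neg_of_add_eq_zero_right hz
  have hAz : Aᵀ *ᵥ z = -(Bᵀ *ᵥ l) := eq_neg_of_add_eq_zero_right hl
  calc x ⬝ᵥ (Aᵀ * S * A) *ᵥ x
      = -(x ⬝ᵥ Aᵀ *ᵥ ((S * S) *ᵥ z)) := by
        rw [← mulVec_mulVec, ← mulVec_mulVec, hAx, mulVec_neg, mulVec_neg, dotProduct_neg,
          mulVec_mulVec _ S S]
    _ = (B *ᵥ x) ⬝ᵥ l := by
        rw [hS, one_mulVec, hAz, dotProduct_neg, neg_neg, dotProduct_mulVec,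
          vecMul_transpose]
    _ = 0 := by rw [hx, zero_dotProduct]

theorem mulVec_injective_saddlePoint (hS : S * S = 1) (hB : LinearIndependent R B.row)
    (hA : ∀ x, B *ᵥ x = 0 → x ⬝ᵥ (Aᵀ * S * A) *ᵥ x = 0 → x = 0) :
    Function.Injective
      (fromBlocks (fromBlocks (0 : Matrix k k R) 0 0 S) (fromRows B A) (fromCols Bᵀ Aᵀ)
        (0 : Matrix n n R)).mulVec := by
  refine (injective_iff_map_eq_zero (mulVecLin _)).2 fun v hv => ?_
  obtain ⟨w, x, rfl⟩ : ∃ w x, v = Sum.elim w x := ⟨_, _, (Sum.elim_comp_inl_inr v).symm⟩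
  obtain ⟨l, z, rfl⟩ : ∃ l z, w = Sum.elim l z := ⟨_, _, (Sum.elim_comp_inl_inr w).symm⟩
  simp only [mulVecLin_apply, fromBlocks_mulVec, fromRows_mulVec, fromCols_mulVec_sumElim,
    Sum.elim_comp_inl, Sum.elim_comp_inr, zero_mulVec, zero_add, add_zero, ← Sum.elim_add_add,
    ← Sum.elim_zero_zero, Sum.elim_eq_iff] at hv ⊢
  obtain ⟨⟨hx, hz⟩, hl⟩ := hv
  obtain rfl : x = 0 := hA x hx (dotProduct_mulVec_eq_zero_of_saddlePoint hS hx hz hl)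
  obtain rfl : z = 0 := by
    rw [mulVec_zero, add_zero] at hz
    rw [← one_mulVec z, ← hS, ← mulVec_mulVec, hz, mulVec_zero]
  obtain rfl : l = 0 := vecMul_injective_iff.2 hB (by simpa [← mulVec_transpose] using hl)
  exact ⟨⟨rfl, rfl⟩, rfl⟩

end Matrix

theorem augmented_matrix_invertible_general (p q n s : ℕ)
    (A : Matrix (Fin p ⊕ Fin q) (Fin n) ℝ) (B : Matrix (Fin s) (Fin n) ℝ)
    (Sig : Matrix (Fin p ⊕ Fin q) (Fin p ⊕ Fin q) ℝ)
    (hSig : Sig = Matrix.fromBlocks (1 : Matrix (Fin p) (Fin p) ℝ) 0 0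
      (-(1 : Matrix (Fin q) (Fin q) ℝ)))
    (hrank : B.rank = s)
    (hpos : ∀ x : Fin n → ℝ, B.mulVec x = 0 → x ≠ 0 →
      0 < x ⬝ᵥ (Aᵀ * Sig * A).mulVec x) :
    IsUnit (Matrix.fromBlocks
      (Matrix.fromBlocks (0 : Matrix (Fin s) (Fin s) ℝ) 0 0 Sig)
      (Matrix.fromRows B A)
      (Matrix.fromCols Bᵀ Aᵀ)
      (0 : Matrix (Fin n) (Fin n) ℝ)) := by
  subst hSig
  rw [← mulVec_injective_iff_isUnit]
  refine mulVec_injective_saddlePoint fromBlocks_one_zero_zero_neg_one_mul_self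
    (linearIndependent_row_of_rank_eq_card (by rwa [Fintype.card_fin])) fun x hBx hx => ?_
  by_contra hx0
  exact (hpos x hBx hx0).ne' hx

/-- If `B ∈ ℝ^{s×n}` has rank `s` and `xᵀ(AᵀΣ_{pq}A)x > 0` for every nonzero `x` in the
null space of `B`, then the block matrix `𝒜 = [[0,0,B],[0,Σ_{pq},A],[Bᵀ,Aᵀ,0]]` of size
`(s+m+n) × (s+m+n)` (with `m = p + q`) is invertible. -/
theorem augmented_matrix_invertible (p q n s : ℕ) (hmn : n ≤ p + q)
    (A : Matrix (Fin p ⊕ Fin q) (Fin n) ℝ) (B : Matrix (Fin s) (Fin n) ℝ)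
    (Sig : Matrix (Fin p ⊕ Fin q) (Fin p ⊕ Fin q) ℝ)
    (hSig : Sig = Matrix.fromBlocks (1 : Matrix (Fin p) (Fin p) ℝ) 0 0
      (-(1 : Matrix (Fin q) (Fin q) ℝ)))
    (hrank : B.rank = s)
    (hpos : ∀ x : Fin n → ℝ, B.mulVec x = 0 → x ≠ 0 →
      0 < x ⬝ᵥ (Aᵀ * Sig * A).mulVec x) :
    IsUnit (Matrix.fromBlocks
      (Matrix.fromBlocks (0 : Matrix (Fin s) (Fin s) ℝ) 0 0 Sig)
      (Matrix.fromRows B A)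
      (Matrix.fromCols Bᵀ Aᵀ)
      (0 : Matrix (Fin n) (Fin n) ℝ)) :=
  augmented_matrix_invertible_general p q n s A B Sig hSig hrank hpos
end

section
/- Under the conditions rank(B)=s and xᵀAᵀΣ_{pq}Ax > 0 for all nonzero x ∈ N(B), a vector x solves the ILSE problem min_x (b-Ax)ᵀΣ_{pq}(b-Ax) subject to Bx=d if and only if Bx=d and there exists ξ ∈ ℝ^s with AᵀΣ_{pq}(b-Ax) = Bᵀξ. -/
/-!
Write `J z = (b - A z)ᵀ Σ (b - A z)` and `g = AᵀΣ(b - A x)`. Along a direction `h ∈ N(B)` the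
objective is the quadratic `J (x + t h) = J x - 2 t (hᵀg) + t² hᵀAᵀΣAh`, so `x` minimizes `J` on
`{Bz = d}` iff `hᵀg = 0` for all `h ∈ N(B)`: necessity because a quadratic without constant term
that is nonnegative has vanishing linear coefficient, sufficiency by the positivity of `AᵀΣA` on
`N(B)`. Finally `N(B)^⊥ = R(Bᵀ)`, which produces the multiplier `ξ`.
-/

open Matrix

namespace Matrix

variable {m n k : Type*} [Fintype m] [Fintype n]

theorem exists_transpose_mulVec_eq_iff (B : Matrix m n ℝ) (g : n → ℝ) :
    (∃ ξ, Bᵀ *ᵥ ξ = g) ↔ ∀ h, B *ᵥ h = 0 → h ⬝ᵥ g = 0 := by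
  classical
  have hrange : LinearMap.range (toEuclideanLin Bᵀ) = (LinearMap.ker (toEuclideanLin B))ᗮ := by
    rw [← Submodule.orthogonal_orthogonal (LinearMap.range _), LinearMap.orthogonal_range,
      ← toEuclideanLin_conjTranspose_eq_adjoint, conjTranspose_eq_transpose_of_trivial,
      transpose_transpose]
  simpa [Submodule.mem_orthogonal', EuclideanSpace.inner_eq_star_dotProduct, WithLp.ext_iff,
    (WithLp.equiv 2 (m → ℝ)).exists_congr_left, (WithLp.equiv 2 (n → ℝ)).forall_congr_left]
    using congrArg (WithLp.toLp 2 g ∈ ·) hrange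

theorem sub_mulVec_dotProduct_mulVec_sub_mulVec {R : Type*} [CommRing R] {S : Matrix m m R}
    (hS : S.IsSymm) (A : Matrix m n R) (r : m → R) (h : n → R) :
    (r - A *ᵥ h) ⬝ᵥ S *ᵥ (r - A *ᵥ h) =
      r ⬝ᵥ S *ᵥ r - 2 * (h ⬝ᵥ Aᵀ *ᵥ (S *ᵥ r)) + h ⬝ᵥ (Aᵀ * S * A) *ᵥ h := by
  have hcross : ∀ u, A *ᵥ h ⬝ᵥ S *ᵥ u = h ⬝ᵥ Aᵀ *ᵥ (S *ᵥ u) := fun u => by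
    rw [dotProduct_mulVec h, vecMul_transpose]
  have hsymm : r ⬝ᵥ S *ᵥ (A *ᵥ h) = A *ᵥ h ⬝ᵥ S *ᵥ r := by
    rw [dotProduct_mulVec, ← mulVec_transpose, hS.eq, dotProduct_comm]
  have hquad : A *ᵥ h ⬝ᵥ S *ᵥ (A *ᵥ h) = h ⬝ᵥ (Aᵀ * S * A) *ᵥ h := by
    rw [hcross, ← mulVec_mulVec, ← mulVec_mulVec]
  simp only [mulVec_sub, sub_dotProduct, dotProduct_sub]
  rw [hquad, hsymm, hcross]
  ring

variable {S : Matrix m m ℝ} {A : Matrix m n ℝ} {b : m → ℝ} {B : Matrix k n ℝ} {d : k → ℝ}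
  {x : n → ℝ}

theorem dotProduct_transpose_mulVec_residual_eq_zero_of_isMinOn (hS : S.IsSymm)
    (hx : B *ᵥ x = d)
    (hmin : IsMinOn (fun z => (b - A *ᵥ z) ⬝ᵥ S *ᵥ (b - A *ᵥ z)) {z | B *ᵥ z = d} x)
    {h : n → ℝ} (hh : B *ᵥ h = 0) : h ⬝ᵥ Aᵀ *ᵥ (S *ᵥ (b - A *ᵥ x)) = 0 := by
  set c := h ⬝ᵥ Aᵀ *ᵥ (S *ᵥ (b - A *ᵥ x))
  -- `J (x + t h) - J x`, written in the shape expected by `discrim_le_zero`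
  have hquad : ∀ t : ℝ, 0 ≤ (h ⬝ᵥ (Aᵀ * S * A) *ᵥ h) * (t * t) + (-2 * c) * t + 0 := fun t => by
    have := isMinOn_iff.mp hmin (x + t • h) (by simp [mulVec_add, mulVec_smul, hh, hx])
    rw [mulVec_add, ← sub_sub, sub_mulVec_dotProduct_mulVec_sub_mulVec hS A _ (t • h),
      smul_dotProduct, mulVec_smul, smul_dotProduct, dotProduct_smul] at this
    simp only [smul_eq_mul] at this
    linarith
  have hdiscrim := discrim_le_zero hquad
  rw [discrim] at hdiscrim
  nlinarith [sq_nonneg c]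

theorem isMinOn_of_dotProduct_transpose_mulVec_residual_eq_zero (hS : S.IsSymm)
    (hpsd : ∀ h, B *ᵥ h = 0 → 0 ≤ h ⬝ᵥ (Aᵀ * S * A) *ᵥ h) (hx : B *ᵥ x = d)
    (hg : ∀ h, B *ᵥ h = 0 → h ⬝ᵥ Aᵀ *ᵥ (S *ᵥ (b - A *ᵥ x)) = 0) :
    IsMinOn (fun z => (b - A *ᵥ z) ⬝ᵥ S *ᵥ (b - A *ᵥ z)) {z | B *ᵥ z = d} x := by
  rw [isMinOn_iff]
  intro z (hz : B *ᵥ z = d)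
  have hBh : B *ᵥ (z - x) = 0 := by rw [mulVec_sub, hz, hx, sub_self]
  have hz_eq : b - A *ᵥ z = b - A *ᵥ x - A *ᵥ (z - x) := by rw [mulVec_sub]; abel
  rw [hz_eq, sub_mulVec_dotProduct_mulVec_sub_mulVec hS A _ (z - x), hg _ hBh]
  linarith [hpsd _ hBh]

theorem isMinOn_residual_iff [Fintype k] (hS : S.IsSymm)
    (hpsd : ∀ h, B *ᵥ h = 0 → 0 ≤ h ⬝ᵥ (Aᵀ * S * A) *ᵥ h) (hx : B *ᵥ x = d) :
    IsMinOn (fun z => (b - A *ᵥ z) ⬝ᵥ S *ᵥ (b - A *ᵥ z)) {z | B *ᵥ z = d} x ↔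
      ∃ ξ, Bᵀ *ᵥ ξ = Aᵀ *ᵥ (S *ᵥ (b - A *ᵥ x)) := by
  rw [exists_transpose_mulVec_eq_iff]
  exact ⟨fun hmin _ => dotProduct_transpose_mulVec_residual_eq_zero_of_isMinOn hS hx hmin,
    isMinOn_of_dotProduct_transpose_mulVec_residual_eq_zero hS hpsd hx⟩

end Matrix

theorem ILSE_optimality_iff_normal_equations_general (p q n s : ℕ)
    (A : Matrix (Fin p ⊕ Fin q) (Fin n) ℝ) (b : Fin p ⊕ Fin q → ℝ)
    (B : Matrix (Fin s) (Fin n) ℝ) (d : Fin s → ℝ)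
    (Sig : Matrix (Fin p ⊕ Fin q) (Fin p ⊕ Fin q) ℝ)
    (hSig : Sig = Matrix.fromBlocks (1 : Matrix (Fin p) (Fin p) ℝ) 0 0
      (-(1 : Matrix (Fin q) (Fin q) ℝ)))
    (hpos : ∀ x : Fin n → ℝ, B.mulVec x = 0 → x ≠ 0 →
      0 < x ⬝ᵥ (Aᵀ * Sig * A).mulVec x)
    (x : Fin n → ℝ) :
    (B.mulVec x = d ∧ ∀ z : Fin n → ℝ, B.mulVec z = d →
        (b - A.mulVec x) ⬝ᵥ Sig.mulVec (b - A.mulVec x) ≤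
          (b - A.mulVec z) ⬝ᵥ Sig.mulVec (b - A.mulVec z)) ↔
      (B.mulVec x = d ∧ ∃ ξ : Fin s → ℝ,
        Aᵀ.mulVec (Sig.mulVec (b - A.mulVec x)) = Bᵀ.mulVec ξ) := by
  have hS : Sig.IsSymm := hSig ▸ isSymm_one.fromBlocks transpose_zero isSymm_one.neg
  have hpsd : ∀ h, B *ᵥ h = 0 → 0 ≤ h ⬝ᵥ (Aᵀ * Sig * A) *ᵥ h := fun h hh => by
    rcases eq_or_ne h 0 with rfl | hne
    · simp
    · exact (hpos h hh hne).le
  refine and_congr_right fun hx => ?_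
  simp only [eq_comm (a := Aᵀ *ᵥ _)]
  exact isMinOn_residual_iff hS hpsd hx

/-- Under `rank(B) = s` and positivity of `x ↦ xᵀAᵀΣ_{pq}Ax` on the null space of `B`,
a vector `x` solves the ILSE problem `min (b-Ax)ᵀΣ(b-Ax) s.t. Bx = d` if and only if
`Bx = d` and there exists `ξ ∈ ℝ^s` with `AᵀΣ(b-Ax) = Bᵀξ`. -/
theorem ILSE_optimality_iff_normal_equations (p q n s : ℕ) (hmn : n ≤ p + q)
    (A : Matrix (Fin p ⊕ Fin q) (Fin n) ℝ) (b : Fin p ⊕ Fin q → ℝ)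
    (B : Matrix (Fin s) (Fin n) ℝ) (d : Fin s → ℝ)
    (Sig : Matrix (Fin p ⊕ Fin q) (Fin p ⊕ Fin q) ℝ)
    (hSig : Sig = Matrix.fromBlocks (1 : Matrix (Fin p) (Fin p) ℝ) 0 0
      (-(1 : Matrix (Fin q) (Fin q) ℝ)))
    (hrank : B.rank = s)
    (hpos : ∀ x : Fin n → ℝ, B.mulVec x = 0 → x ≠ 0 →
      0 < x ⬝ᵥ (Aᵀ * Sig * A).mulVec x)
    (x : Fin n → ℝ) :
    (B.mulVec x = d ∧ ∀ z : Fin n → ℝ, B.mulVec z = d →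
        (b - A.mulVec x) ⬝ᵥ Sig.mulVec (b - A.mulVec x) ≤
          (b - A.mulVec z) ⬝ᵥ Sig.mulVec (b - A.mulVec z)) ↔
      (B.mulVec x = d ∧ ∃ ξ : Fin s → ℝ,
        Aᵀ.mulVec (Sig.mulVec (b - A.mulVec x)) = Bᵀ.mulVec ξ) :=
  ILSE_optimality_iff_normal_equations_general p q n s A b B d Sig hSig hpos x
end

section
/- Let K = [I_n⊗(r_yᵀΣ_{pq}) - AᵀΣ_{pq}(yᵀ⊗I_m), θ₁⁻¹AᵀΣ_{pq}] ∈ ℝ^{n×(n+1)m}. Then KKᵀ = (θ₁⁻² + ‖y‖₂²)·[(A - r_y y₀ᵀ)ᵀ(A - r_y y₀ᵀ) + (‖r_y‖₂²/(θ₁⁻²+‖y‖₂²))I_n - (r_y y₀ᵀ)ᵀ(r_y y₀ᵀ)], where y₀ = y/(θ₁⁻²+‖y‖₂²). -/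
/-!
Write `K = [P - AᵀΣR, θ₁⁻¹AᵀΣ]` with `P = I_n ⊗ (r_yᵀΣ)` and `R = yᵀ ⊗ I_m`. The Kronecker
structure gives `PPᵀ = ‖r_yᵀΣ‖²I`, `PRᵀ = y r_yᵀΣ` and `RRᵀ = ‖y‖²I`; since `ΣΣᵀ = I`, all the
`Σ`'s cancel and `KKᵀ = c AᵀA - (AᵀW + WᵀA) + ‖r_y‖²I` with `W = r_y yᵀ` and `c = θ₁⁻² + ‖y‖²`.
Completing the square, `c (A - W/c)ᵀ(A - W/c) - (W/c)ᵀ(W/c) = c AᵀA - (AᵀW + WᵀA)`, which is the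
right-hand side.
-/

open Matrix Kronecker

noncomputable def enorm2 {ι : Type*} [Fintype ι] (v : ι → ℝ) : ℝ :=
  Real.sqrt (∑ i, v i ^ 2)

def rowM {κ : Type*} (v : κ → ℝ) : Matrix Unit κ ℝ := fun _ j => v j

lemma enorm2_sq {ι : Type*} [Fintype ι] (v : ι → ℝ) : enorm2 v ^ 2 = v ⬝ᵥ v := by
  rw [enorm2, Real.sq_sqrt (Finset.sum_nonneg fun i _ => sq_nonneg _)]
  simp only [dotProduct, sq]

section Kronecker

variable {m n : Type*} [Fintype m] [Fintype n]

lemma one_kronecker_rowM_mul_transpose [DecidableEq n] (s t : m → ℝ) :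
    reindex (Equiv.prodPUnit n) (Equiv.refl (n × m)) ((1 : Matrix n n ℝ) ⊗ₖ rowM s) *
      (reindex (Equiv.prodPUnit n) (Equiv.refl (n × m)) ((1 : Matrix n n ℝ) ⊗ₖ rowM t))ᵀ =
      (s ⬝ᵥ t) • 1 := by
  ext i j
  simp [mul_apply, Fintype.sum_prod_type, rowM, one_apply, dotProduct]

lemma one_kronecker_rowM_mul_rowM_kronecker_one_transpose [DecidableEq m] [DecidableEq n]
    (s : m → ℝ) (y : n → ℝ) :
    reindex (Equiv.prodPUnit n) (Equiv.refl (n × m)) ((1 : Matrix n n ℝ) ⊗ₖ rowM s) *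
      (reindex (Equiv.punitProd m) (Equiv.refl (n × m)) (rowM y ⊗ₖ (1 : Matrix m m ℝ)))ᵀ =
      vecMulVec y s := by
  ext i j
  simp [mul_apply, Fintype.sum_prod_type, rowM, one_apply, vecMulVec, mul_comm]

lemma rowM_kronecker_one_mul_transpose [DecidableEq m] (y z : n → ℝ) :
    reindex (Equiv.punitProd m) (Equiv.refl (n × m)) (rowM y ⊗ₖ (1 : Matrix m m ℝ)) *
      (reindex (Equiv.punitProd m) (Equiv.refl (n × m)) (rowM z ⊗ₖ (1 : Matrix m m ℝ)))ᵀ =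
      (y ⬝ᵥ z) • 1 := by
  ext i j
  simp [mul_apply, Fintype.sum_prod_type, rowM, one_apply, dotProduct]

end Kronecker

section Orthogonal

variable {R : Type*} [CommRing R] {l m : Type*} [Fintype m] [DecidableEq m]

lemma vecMul_dotProduct_vecMul_of_mul_transpose_eq_one {S : Matrix m m R} (hS : S * Sᵀ = 1)
    (r : m → R) : (r ᵥ* S) ⬝ᵥ (r ᵥ* S) = r ⬝ᵥ r := by
  rw [← dotProduct_mulVec, ← mulVec_transpose, mulVec_mulVec, hS, one_mulVec]

lemma mul_mul_transpose_of_mul_transpose_eq_one {S : Matrix m m R} (hS : S * Sᵀ = 1)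
    (B : Matrix l m R) : B * S * (B * S)ᵀ = B * Bᵀ := by
  rw [transpose_mul, Matrix.mul_assoc, ← Matrix.mul_assoc S, hS, Matrix.one_mul]

end Orthogonal

lemma smul_gram_sub_inv_smul {K : Type*} [Field K] {m n : Type*} [Fintype m] [DecidableEq n]
    {c : K} (hc : c ≠ 0) (d : K) (A W : Matrix m n K) :
    c • ((A - c⁻¹ • W)ᵀ * (A - c⁻¹ • W) + (d / c) • 1 - (c⁻¹ • W)ᵀ * (c⁻¹ • W)) =
      c • (Aᵀ * A) - (Aᵀ * W + Wᵀ * A) + d • 1 := by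
  simp only [transpose_sub, transpose_smul, Matrix.sub_mul, Matrix.mul_sub, Matrix.smul_mul,
    Matrix.mul_smul]
  match_scalars <;> simp [hc, mul_div_cancel₀]

lemma fromCols_kronecker_mul_transpose_self {m n : Type*} [Fintype m] [Fintype n]
    [DecidableEq m] [DecidableEq n]
    (A : Matrix m n ℝ) (r : m → ℝ) (y : n → ℝ) (t : ℝ) {S : Matrix m m ℝ} (hS : S * Sᵀ = 1) :
    fromCols
        (reindex (Equiv.prodPUnit n) (Equiv.refl (n × m)) ((1 : Matrix n n ℝ) ⊗ₖ rowM (r ᵥ* S)) -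
          Aᵀ * S * reindex (Equiv.punitProd m) (Equiv.refl (n × m)) (rowM y ⊗ₖ (1 : Matrix m m ℝ)))
        (t • (Aᵀ * S)) *
      (fromCols
        (reindex (Equiv.prodPUnit n) (Equiv.refl (n × m)) ((1 : Matrix n n ℝ) ⊗ₖ rowM (r ᵥ* S)) -
          Aᵀ * S * reindex (Equiv.punitProd m) (Equiv.refl (n × m)) (rowM y ⊗ₖ (1 : Matrix m m ℝ)))
        (t • (Aᵀ * S)))ᵀ =
      (t ^ 2 + y ⬝ᵥ y) • (Aᵀ * A) - (Aᵀ * vecMulVec r y + (vecMulVec r y)ᵀ * A) + (r ⬝ᵥ r) • 1 := by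
  set P := reindex (Equiv.prodPUnit n) (Equiv.refl (n × m)) ((1 : Matrix n n ℝ) ⊗ₖ rowM (r ᵥ* S))
  set R := reindex (Equiv.punitProd m) (Equiv.refl (n × m)) (rowM y ⊗ₖ (1 : Matrix m m ℝ))
  have hPP : P * Pᵀ = (r ⬝ᵥ r) • 1 := by
    rw [one_kronecker_rowM_mul_transpose, vecMul_dotProduct_vecMul_of_mul_transpose_eq_one hS]
  have hPQ : P * (Aᵀ * S * R)ᵀ = (vecMulVec r y)ᵀ * A := by
    rw [transpose_mul, transpose_mul, transpose_transpose, ← Matrix.mul_assoc,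
      one_kronecker_rowM_mul_rowM_kronecker_one_transpose, vecMulVec_mul, vecMul_vecMul,
      ← Matrix.mul_assoc, hS, Matrix.one_mul, transpose_vecMulVec, vecMulVec_mul]
  have hQP : Aᵀ * S * R * Pᵀ = Aᵀ * vecMulVec r y := by
    rw [← transpose_transpose (Aᵀ * S * R * Pᵀ), transpose_mul, transpose_transpose, hPQ,
      transpose_mul, transpose_transpose]
  have hQQ : Aᵀ * S * R * (Aᵀ * S * R)ᵀ = (y ⬝ᵥ y) • (Aᵀ * A) := by
    rw [transpose_mul, Matrix.mul_assoc, ← Matrix.mul_assoc R, rowM_kronecker_one_mul_transpose,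
      Matrix.smul_mul, Matrix.one_mul, Matrix.mul_smul,
      mul_mul_transpose_of_mul_transpose_eq_one hS, transpose_transpose]
  have hNN : t • (Aᵀ * S) * (t • (Aᵀ * S))ᵀ = t ^ 2 • (Aᵀ * A) := by
    rw [transpose_smul, Matrix.smul_mul, Matrix.mul_smul, smul_smul,
      mul_mul_transpose_of_mul_transpose_eq_one hS, transpose_transpose, sq]
  rw [transpose_fromCols, fromCols_mul_fromRows, transpose_sub, Matrix.sub_mul, Matrix.mul_sub,
    Matrix.mul_sub, hPP, hPQ, hQP, hQQ, hNN, add_smul]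
  abel

/-- Let `K = [I_n⊗(r_yᵀΣ) - AᵀΣ(yᵀ⊗I_m), θ₁⁻¹AᵀΣ] ∈ ℝ^{n×(n+1)m}`, with `Σ` symmetric and
`Σ² = I_m`.  Then
`KKᵀ = (θ₁⁻² + ‖y‖₂²)·[(A - r_y y₀ᵀ)ᵀ(A - r_y y₀ᵀ) + (‖r_y‖₂²/(θ₁⁻²+‖y‖₂²))I_n
        - (r_y y₀ᵀ)ᵀ(r_y y₀ᵀ)]`, where `y₀ = y/(θ₁⁻²+‖y‖₂²)`. -/
theorem KKt_identity (m n : ℕ)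
    (A : Matrix (Fin m) (Fin n) ℝ) (ry : Fin m → ℝ) (y : Fin n → ℝ)
    (θ₁ : ℝ) (hθ₁ : 0 < θ₁)
    (Sig : Matrix (Fin m) (Fin m) ℝ) (hSymm : Sigᵀ = Sig) (hInv : Sig * Sig = 1) :
    (Matrix.fromCols
        (Matrix.reindex (Equiv.prodPUnit (Fin n)) (Equiv.refl (Fin n × Fin m))
            ((1 : Matrix (Fin n) (Fin n) ℝ) ⊗ₖ rowM (Matrix.vecMul ry Sig)) -
          Aᵀ * Sig *
            Matrix.reindex (Equiv.punitProd (Fin m)) (Equiv.refl (Fin n × Fin m))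
              (rowM y ⊗ₖ (1 : Matrix (Fin m) (Fin m) ℝ)))
        (θ₁⁻¹ • (Aᵀ * Sig))) *
      (Matrix.fromCols
        (Matrix.reindex (Equiv.prodPUnit (Fin n)) (Equiv.refl (Fin n × Fin m))
            ((1 : Matrix (Fin n) (Fin n) ℝ) ⊗ₖ rowM (Matrix.vecMul ry Sig)) -
          Aᵀ * Sig *
            Matrix.reindex (Equiv.punitProd (Fin m)) (Equiv.refl (Fin n × Fin m))
              (rowM y ⊗ₖ (1 : Matrix (Fin m) (Fin m) ℝ)))
        (θ₁⁻¹ • (Aᵀ * Sig)))ᵀ =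
    (θ₁⁻¹ ^ 2 + enorm2 y ^ 2) •
      ((A - Matrix.vecMulVec ry ((θ₁⁻¹ ^ 2 + enorm2 y ^ 2)⁻¹ • y))ᵀ *
          (A - Matrix.vecMulVec ry ((θ₁⁻¹ ^ 2 + enorm2 y ^ 2)⁻¹ • y)) +
        (enorm2 ry ^ 2 / (θ₁⁻¹ ^ 2 + enorm2 y ^ 2)) • (1 : Matrix (Fin n) (Fin n) ℝ) -
        (Matrix.vecMulVec ry ((θ₁⁻¹ ^ 2 + enorm2 y ^ 2)⁻¹ • y))ᵀ *
          Matrix.vecMulVec ry ((θ₁⁻¹ ^ 2 + enorm2 y ^ 2)⁻¹ • y)) := by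
  have hc : θ₁⁻¹ ^ 2 + enorm2 y ^ 2 ≠ 0 := by positivity
  have hSig : Sig * Sigᵀ = 1 := by rw [hSymm, hInv]
  rw [fromCols_kronecker_mul_transpose_self A ry y θ₁⁻¹ hSig, vecMulVec_smul,
    smul_gram_sub_inv_smul hc, enorm2_sq y, enorm2_sq ry]
end

section
/- If r_y ≠ 0, then the smallest singular value α of the matrix K = [I_n⊗(r_yᵀΣ_{pq}) - AᵀΣ_{pq}(yᵀ⊗I_m), θ₁⁻¹AᵀΣ_{pq}] satisfies α ≥ ‖r_y‖₂ / √(1 + θ₁²‖y‖₂²). -/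
open Matrix Kronecker

/-- The smallest singular value of a (wide) matrix `K ∈ ℝ^{n×κ}`: the minimum of
`‖Kᵀu‖₂` over unit vectors `u ∈ ℝ^n`. -/
noncomputable def sigmaMin {n : ℕ} {κ : Type*} [Fintype κ]
    (K : Matrix (Fin n) κ ℝ) : ℝ :=
  sInf {c | ∃ u : Fin n → ℝ, enorm2 u = 1 ∧ c = enorm2 (Matrix.vecMul u K)}

/-!
For a unit vector `u`, `Kᵀu` consists of the block `u ⊗ s - y ⊗ w` and the block `θ₁⁻¹ w`, where
`s = Σ r_y` and `w = Σ A u`. Since `Σ` is orthogonal, `‖r_y‖ = ‖s‖ = ‖u ⊗ s‖`, and the triangle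
inequality gives `‖r_y‖ ≤ ‖u ⊗ s - y ⊗ w‖ · 1 + ‖θ₁⁻¹ w‖ · θ₁‖y‖`. Cauchy–Schwarz in `ℝ²` bounds
the right-hand side by `‖Kᵀu‖ · √(1 + θ₁²‖y‖²)`.
-/

lemma enorm2_eq_norm {ι : Type*} [Fintype ι] (v : ι → ℝ) :
    enorm2 v = ‖(WithLp.toLp 2 v : EuclideanSpace ℝ ι)‖ := by
  simp [enorm2, EuclideanSpace.norm_eq]

lemma enorm2_le_enorm2_sub_add {ι : Type*} [Fintype ι] (v w : ι → ℝ) :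
    enorm2 v ≤ enorm2 (v - w) + enorm2 w := by
  simpa [enorm2_eq_norm] using
    norm_le_norm_sub_add (WithLp.toLp 2 v : EuclideanSpace ℝ ι) (WithLp.toLp 2 w)

lemma enorm2_smul {ι : Type*} [Fintype ι] (c : ℝ) (v : ι → ℝ) :
    enorm2 (c • v) = |c| * enorm2 v := by
  simp [enorm2_eq_norm, norm_smul]

lemma enorm2_sumElim {ι κ : Type*} [Fintype ι] [Fintype κ] (v : ι → ℝ) (w : κ → ℝ) :
    enorm2 (Sum.elim v w) = √(enorm2 v ^ 2 + enorm2 w ^ 2) := by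
  simp only [enorm2, Fintype.sum_sum_type, Sum.elim_inl, Sum.elim_inr]
  rw [Real.sq_sqrt (by positivity), Real.sq_sqrt (by positivity)]

lemma enorm2_outer {ι κ : Type*} [Fintype ι] [Fintype κ] (v : ι → ℝ) (w : κ → ℝ) :
    enorm2 (fun p : ι × κ => v p.1 * w p.2) = enorm2 v * enorm2 w := by
  simp only [enorm2, mul_pow, Fintype.sum_prod_type, ← Finset.mul_sum, ← Finset.sum_mul]
  exact Real.sqrt_mul (by positivity) _

lemma enorm2_vecMul_of_mul_transpose_eq_one {ι : Type*} [Fintype ι] [DecidableEq ι]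
    {Q : Matrix ι ι ℝ} (hQ : Q * Qᵀ = 1) (v : ι → ℝ) : enorm2 (v ᵥ* Q) = enorm2 v := by
  have h : (v ᵥ* Q) ⬝ᵥ (v ᵥ* Q) = v ⬝ᵥ v := by
    rw [← dotProduct_mulVec, ← vecMul_transpose, vecMul_vecMul, hQ, vecMul_one]
  simp only [enorm2, sq]
  exact congrArg Real.sqrt h

lemma mul_add_mul_le_sqrt_mul_sqrt (a b c d : ℝ) :
    a * b + c * d ≤ √(a ^ 2 + c ^ 2) * √(b ^ 2 + d ^ 2) := by
  rw [← Real.sqrt_mul (by positivity)]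
  exact (le_abs_self _).trans <| Real.abs_le_sqrt <| by nlinarith [sq_nonneg (a * d - b * c)]

lemma vecMul_reindex_one_kronecker_rowM {ι κ : Type*} [Fintype ι] [DecidableEq ι]
    (u : ι → ℝ) (s : κ → ℝ) :
    u ᵥ* reindex (Equiv.prodPUnit ι) (Equiv.refl (ι × κ)) ((1 : Matrix ι ι ℝ) ⊗ₖ rowM s) =
      fun p => u p.1 * s p.2 := by
  ext p
  simp [vecMul, dotProduct, rowM, one_apply]

lemma vecMul_reindex_rowM_kronecker_one {ι κ : Type*} [Fintype κ] [DecidableEq κ]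
    (w : κ → ℝ) (y : ι → ℝ) :
    w ᵥ* reindex (Equiv.punitProd κ) (Equiv.refl (ι × κ)) (rowM y ⊗ₖ (1 : Matrix κ κ ℝ)) =
      fun p => y p.1 * w p.2 := by
  ext p
  simp [vecMul, dotProduct, rowM, one_apply, mul_comm]

lemma enorm2_le_sqrt_mul_enorm2_sumElim {ι κ : Type*} [Fintype ι] [Fintype κ]
    {u : ι → ℝ} (hu : enorm2 u = 1) (s : κ → ℝ) (y : ι → ℝ) (w : κ → ℝ) {θ : ℝ} (hθ : θ ≠ 0) :
    enorm2 s ≤ √(1 + θ ^ 2 * enorm2 y ^ 2) *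
      enorm2 (Sum.elim ((fun p : ι × κ => u p.1 * s p.2) - fun p => y p.1 * w p.2) (θ⁻¹ • w)) := by
  set X := (fun p : ι × κ => u p.1 * s p.2) - fun p => y p.1 * w p.2
  calc enorm2 s = enorm2 (fun p : ι × κ => u p.1 * s p.2) := by rw [enorm2_outer, hu, one_mul]
    _ ≤ enorm2 X + enorm2 (fun p : ι × κ => y p.1 * w p.2) := enorm2_le_enorm2_sub_add _ _
    _ = enorm2 X * 1 + enorm2 (θ⁻¹ • w) * (|θ| * enorm2 y) := by
      rw [enorm2_outer, enorm2_smul, abs_inv]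
      field_simp
    _ ≤ √(enorm2 X ^ 2 + enorm2 (θ⁻¹ • w) ^ 2) * √(1 ^ 2 + (|θ| * enorm2 y) ^ 2) :=
      mul_add_mul_le_sqrt_mul_sqrt _ _ _ _
    _ = _ := by rw [enorm2_sumElim, mul_comm, mul_pow, sq_abs, one_pow]

theorem sigmaMin_lower_bound_general (m n : ℕ) (hn : 0 < n)
    (A : Matrix (Fin m) (Fin n) ℝ) (ry : Fin m → ℝ) (y : Fin n → ℝ)
    (θ₁ : ℝ) (hθ₁ : 0 < θ₁)
    (Sig : Matrix (Fin m) (Fin m) ℝ) (hSymm : Sigᵀ = Sig) (hInv : Sig * Sig = 1) :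
    enorm2 ry / Real.sqrt (1 + θ₁ ^ 2 * enorm2 y ^ 2) ≤
      sigmaMin (Matrix.fromCols
        (Matrix.reindex (Equiv.prodPUnit (Fin n)) (Equiv.refl (Fin n × Fin m))
            ((1 : Matrix (Fin n) (Fin n) ℝ) ⊗ₖ rowM (Matrix.vecMul ry Sig)) -
          Aᵀ * Sig *
            Matrix.reindex (Equiv.punitProd (Fin m)) (Equiv.refl (Fin n × Fin m))
              (rowM y ⊗ₖ (1 : Matrix (Fin m) (Fin m) ℝ)))
        (θ₁⁻¹ • (Aᵀ * Sig))) := by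
  have hSig : Sig * Sigᵀ = 1 := by rw [hSymm, hInv]
  apply le_csInf
  · exact ⟨_, Pi.single ⟨0, hn⟩ 1, by simp [enorm2, Pi.single_apply], rfl⟩
  · rintro _ ⟨u, hu, rfl⟩
    rw [vecMul_fromCols, vecMul_sub, ← vecMul_vecMul, vecMul_reindex_one_kronecker_rowM,
      vecMul_reindex_rowM_kronecker_one, vecMul_smul, div_le_iff₀ (by positivity), mul_comm,
      ← enorm2_vecMul_of_mul_transpose_eq_one hSig ry]
    exact enorm2_le_sqrt_mul_enorm2_sumElim hu _ y _ hθ₁.ne'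

/-- If `r_y ≠ 0`, the smallest singular value `α` of
`K = [I_n⊗(r_yᵀΣ) - AᵀΣ(yᵀ⊗I_m), θ₁⁻¹AᵀΣ]` (with `Σ` symmetric, `Σ² = I_m`) satisfies
`α ≥ ‖r_y‖₂ / √(1 + θ₁²‖y‖₂²)`. -/
theorem sigmaMin_lower_bound (m n : ℕ) (hn : 0 < n)
    (A : Matrix (Fin m) (Fin n) ℝ) (ry : Fin m → ℝ) (hry : ry ≠ 0) (y : Fin n → ℝ)
    (θ₁ : ℝ) (hθ₁ : 0 < θ₁)
    (Sig : Matrix (Fin m) (Fin m) ℝ) (hSymm : Sigᵀ = Sig) (hInv : Sig * Sig = 1) :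
    enorm2 ry / Real.sqrt (1 + θ₁ ^ 2 * enorm2 y ^ 2) ≤
      sigmaMin (Matrix.fromCols
        (Matrix.reindex (Equiv.prodPUnit (Fin n)) (Equiv.refl (Fin n × Fin m))
            ((1 : Matrix (Fin n) (Fin n) ℝ) ⊗ₖ rowM (Matrix.vecMul ry Sig)) -
          Aᵀ * Sig *
            Matrix.reindex (Equiv.punitProd (Fin m)) (Equiv.refl (Fin n × Fin m))
              (rowM y ⊗ₖ (1 : Matrix (Fin m) (Fin m) ℝ)))
        (θ₁⁻¹ • (Aᵀ * Sig))) :=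
  sigmaMin_lower_bound_general m n hn A ry y θ₁ hθ₁ Sig hSymm hInv
end

section
/- If rank(B) = s and the quadratic form xᵀAᵀΣ_{pq}Ax is positive definite on the null space of B, then the solution of the augmented system [[0,0,B],[0,Σ_{pq},A],[Bᵀ,Aᵀ,0]]·(λ, s, x) = (d, b, 0) yields x solving the ILSE normal equations: with ξ = -λ and r = b - Ax, one has s = Σ_{pq}r, AᵀΣ_{pq}(b-Ax) = Bᵀξ, and Bx = d. -/
open Matrix

theorem Matrix.fromBlocks_one_zero_zero_neg_one_mul_self_s19 {R p q : Type*} [Ring R]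
    [Fintype p] [Fintype q] [DecidableEq p] [DecidableEq q] :
    fromBlocks (1 : Matrix p p R) 0 0 (-1 : Matrix q q R) * fromBlocks 1 0 0 (-1) = 1 := by
  simp [fromBlocks_multiply, fromBlocks_one]

theorem Matrix.augmented_mulVec_eq_iff {R k m n : Type*} [Semiring R]
    [Fintype k] [Fintype m] [Fintype n]
    (S : Matrix m m R) (A : Matrix m n R) (B : Matrix k n R)
    (l : k → R) (v : m → R) (x : n → R) (d : k → R) (b : m → R) :
    fromBlocks (fromBlocks 0 0 0 S) (fromRows B A) (fromCols Bᵀ Aᵀ) 0 *ᵥ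
        Sum.elim (Sum.elim l v) x = Sum.elim (Sum.elim d b) 0 ↔
      B *ᵥ x = d ∧ S *ᵥ v + A *ᵥ x = b ∧ Bᵀ *ᵥ l + Aᵀ *ᵥ v = 0 := by
  simp [fromBlocks_mulVec, fromRows_mulVec, fromCols_mulVec, ← Sum.elim_add_add, Sum.elim_eq_iff,
    and_assoc]

theorem Matrix.mulVec_sub_eq_of_mul_self_eq_one {R m n : Type*} [Ring R] [Fintype m]
    [Fintype n] [DecidableEq m] {S : Matrix m m R} (hS : S * S = 1) {A : Matrix m n R}
    {v : m → R} {x : n → R} {b : m → R} (h : S *ᵥ v + A *ᵥ x = b) :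
    S *ᵥ (b - A *ᵥ x) = v := by
  rw [← h, add_sub_cancel_right, mulVec_mulVec, hS, one_mulVec]

theorem augmented_system_gives_normal_equations_general (p q n s : ℕ)
    (A : Matrix (Fin p ⊕ Fin q) (Fin n) ℝ) (b : Fin p ⊕ Fin q → ℝ)
    (B : Matrix (Fin s) (Fin n) ℝ) (d : Fin s → ℝ)
    (Sig : Matrix (Fin p ⊕ Fin q) (Fin p ⊕ Fin q) ℝ)
    (hSig : Sig = Matrix.fromBlocks (1 : Matrix (Fin p) (Fin p) ℝ) 0 0
      (-(1 : Matrix (Fin q) (Fin q) ℝ)))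
    (lam : Fin s → ℝ) (sv : Fin p ⊕ Fin q → ℝ) (x : Fin n → ℝ)
    (hsol : (Matrix.fromBlocks
        (Matrix.fromBlocks (0 : Matrix (Fin s) (Fin s) ℝ) 0 0 Sig)
        (Matrix.fromRows B A)
        (Matrix.fromCols Bᵀ Aᵀ)
        (0 : Matrix (Fin n) (Fin n) ℝ)).mulVec
          (Sum.elim (Sum.elim lam sv) x) = Sum.elim (Sum.elim d b) 0) :
    sv = Sig.mulVec (b - A.mulVec x) ∧
      Aᵀ.mulVec (Sig.mulVec (b - A.mulVec x)) = Bᵀ.mulVec (-lam) ∧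
      B.mulVec x = d := by
  obtain ⟨hconstraint, hresidual, hstationary⟩ := (augmented_mulVec_eq_iff Sig A B _ _ _ _ _).1 hsol
  have hSig_sq : Sig * Sig = 1 := hSig ▸ fromBlocks_one_zero_zero_neg_one_mul_self_s19
  have hsv := mulVec_sub_eq_of_mul_self_eq_one hSig_sq hresidual
  refine ⟨hsv.symm, ?_, hconstraint⟩
  rwa [hsv, mulVec_neg, eq_neg_iff_add_eq_zero, add_comm]

/-- If `rank(B) = s` and `xᵀAᵀΣAx > 0` on the null space of `B`, then a solution
`(λ, s, x)` of the augmented system `[[0,0,B],[0,Σ,A],[Bᵀ,Aᵀ,0]]·(λ,s,x) = (d,b,0)`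
yields a solution of the ILSE normal equations: with `ξ = -λ` and `r = b - Ax` one has
`s = Σr`, `AᵀΣ(b - Ax) = Bᵀξ` and `Bx = d`. -/
theorem augmented_system_gives_normal_equations (p q n s : ℕ)
    (A : Matrix (Fin p ⊕ Fin q) (Fin n) ℝ) (b : Fin p ⊕ Fin q → ℝ)
    (B : Matrix (Fin s) (Fin n) ℝ) (d : Fin s → ℝ)
    (Sig : Matrix (Fin p ⊕ Fin q) (Fin p ⊕ Fin q) ℝ)
    (hSig : Sig = Matrix.fromBlocks (1 : Matrix (Fin p) (Fin p) ℝ) 0 0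
      (-(1 : Matrix (Fin q) (Fin q) ℝ)))
    (hrank : B.rank = s)
    (hpos : ∀ x : Fin n → ℝ, B.mulVec x = 0 → x ≠ 0 →
      0 < x ⬝ᵥ (Aᵀ * Sig * A).mulVec x)
    (lam : Fin s → ℝ) (sv : Fin p ⊕ Fin q → ℝ) (x : Fin n → ℝ)
    (hsol : (Matrix.fromBlocks
        (Matrix.fromBlocks (0 : Matrix (Fin s) (Fin s) ℝ) 0 0 Sig)
        (Matrix.fromRows B A)
        (Matrix.fromCols Bᵀ Aᵀ)
        (0 : Matrix (Fin n) (Fin n) ℝ)).mulVec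
          (Sum.elim (Sum.elim lam sv) x) = Sum.elim (Sum.elim d b) 0) :
    sv = Sig.mulVec (b - A.mulVec x) ∧
      Aᵀ.mulVec (Sig.mulVec (b - A.mulVec x)) = Bᵀ.mulVec (-lam) ∧
      B.mulVec x = d :=
  augmented_system_gives_normal_equations_general p q n s A b B d Sig hSig lam sv x hsol
end
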